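/- arXiv:2106.03632 — 3 statements merged into one kernel-verified Lean document; each statement's English description precedes it below -/
import Mathlib

section
/- For binary classification with 0-1 loss, letting H_t be the set of all classifiers X → {−1, 0, +1} (allowing abstention, which is always wrong), the total variation distance (measured as Σ_y ∫ |p_S(x,y) − p_T(x,y)| dx) satisfies d_TV(S,T) ≤ 4·T_{H_t}^r(S,T), where T_{H_t}^r(S,T) = sup_{h∈H_t} |ε_S^{0-1}(h) − ε_T^{0-1}(h)|. -/
open MeasureTheory

/-!
Given a measurable event `A`, let `B` and `C` be its slices at labels `1` and `-1`. The classifier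
that abstains on `B` and predicts `1` elsewhere errs exactly on `(B × {1}) ∪ (X × {-1})`, and the
one that abstains on `C` and predicts `-1` elsewhere errs exactly on `(C × {-1}) ∪ (X × {1})`. When
all labels are `±1`, these two error events together cover `A` once and the whole space once more,
so `P(A) + 1` is the sum of the two errors, for `S` and for `T` alike. Hence `|S(A) - T(A)|` is at
most twice the supremum of the error gaps, and the total variation distance (twice the largest
`|S(A) - T(A)|`) is at most four times it.
-/

section

variable {X : Type*}

open Classical in
noncomputable def abstainOn (B : Set X) (v : ℤ) (x : X) : ℤ := if x ∈ B then 0 else v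

def misclassified (h : X → ℤ) : Set (X × ℤ) := {p | h p.1 ≠ p.2}

lemma abstainOn_mem_ternary (B : Set X) {v : ℤ} (hv : v = -1 ∨ v = 1) (x : X) :
    abstainOn B v x = -1 ∨ abstainOn B v x = 0 ∨ abstainOn B v x = 1 := by
  unfold abstainOn
  split_ifs <;> omega

lemma indicator_add_one_eq_indicator_misclassified (A : Set (X × ℤ)) {p : X × ℤ}
    (hp : p.2 = -1 ∨ p.2 = 1) :
    A.indicator (1 : X × ℤ → ENNReal) p + 1
      = (misclassified (abstainOn {x | (x, 1) ∈ A} 1)).indicator 1 p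
        + (misclassified (abstainOn {x | (x, -1) ∈ A} (-1))).indicator 1 p := by
  obtain ⟨x, y⟩ := p
  simp only [misclassified, abstainOn, Set.indicator_apply, Set.mem_ofPred_eq, Pi.one_apply]
  rcases hp with rfl | rfl <;> split_ifs <;> simp_all [add_comm]

variable [MeasurableSpace X]

lemma measurable_abstainOn {B : Set X} (hB : MeasurableSet B) (v : ℤ) :
    Measurable (abstainOn B v) :=
  Measurable.ite hB measurable_const measurable_const

lemma measurableSet_misclassified {h : X → ℤ} (hh : Measurable h) :
    MeasurableSet (misclassified h) :=
  (measurableSet_eq_fun (hh.comp measurable_fst) measurable_snd).compl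

lemma measurableSet_slice {A : Set (X × ℤ)} (hA : MeasurableSet A) (y : ℤ) :
    MeasurableSet {x | (x, y) ∈ A} :=
  hA.preimage (measurable_id.prodMk measurable_const)

lemma ae_label_of_measure_eq_one (μ : Measure (X × ℤ)) [IsProbabilityMeasure μ]
    (hlab : μ {p : X × ℤ | p.2 = -1 ∨ p.2 = 1} = 1) :
    ∀ᵐ p ∂μ, p.2 = -1 ∨ p.2 = 1 := by
  refine (ae_iff_measure_eq ?_).2 (hlab.trans measure_univ.symm)
  exact ((measurableSet_singleton _).preimage measurable_snd).union
    ((measurableSet_singleton _).preimage measurable_snd) |>.nullMeasurableSet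

lemma measure_add_one_eq_misclassified (μ : Measure (X × ℤ)) [IsProbabilityMeasure μ]
    (hlab : ∀ᵐ p ∂μ, p.2 = -1 ∨ p.2 = 1) {A : Set (X × ℤ)} (hA : MeasurableSet A) :
    μ A + 1 = μ (misclassified (abstainOn {x | (x, 1) ∈ A} 1))
      + μ (misclassified (abstainOn {x | (x, -1) ∈ A} (-1))) := by
  have hB := measurableSet_misclassified (measurable_abstainOn (measurableSet_slice hA 1) 1)
  have hC := measurableSet_misclassified (measurable_abstainOn (measurableSet_slice hA (-1)) (-1))
  rw [← lintegral_indicator_one hA, ← lintegral_indicator_one hB, ← lintegral_indicator_one hC,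
    ← lintegral_add_left (measurable_one.indicator hB), ← measure_univ (μ := μ),
    ← lintegral_one, ← lintegral_add_left (measurable_one.indicator hA)]
  exact lintegral_congr_ae <| hlab.mono fun p hp ↦ indicator_add_one_eq_indicator_misclassified A hp

lemma toReal_measure_add_one_eq_misclassified (μ : Measure (X × ℤ)) [IsProbabilityMeasure μ]
    (hlab : ∀ᵐ p ∂μ, p.2 = -1 ∨ p.2 = 1) {A : Set (X × ℤ)} (hA : MeasurableSet A) :
    (μ A).toReal + 1 = (μ (misclassified (abstainOn {x | (x, 1) ∈ A} 1))).toReal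
      + (μ (misclassified (abstainOn {x | (x, -1) ∈ A} (-1)))).toReal := by
  rw [← ENNReal.toReal_add (by finiteness) (by finiteness),
    ← measure_add_one_eq_misclassified μ hlab hA,
    ENNReal.toReal_add (by finiteness) ENNReal.one_ne_top, ENNReal.toReal_one]

lemma abs_toReal_measure_sub_le_one (μ ν : Measure X) [IsProbabilityMeasure μ]
    [IsProbabilityMeasure ν] (s t : Set X) : |(μ s).toReal - (ν t).toReal| ≤ 1 :=
  abs_sub_le_of_nonneg_of_le ENNReal.toReal_nonneg measureReal_le_one ENNReal.toReal_nonneg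
    measureReal_le_one

end

/-- For binary classification with 0-1 loss and classifiers allowed to abstain (output 0,
always counted as an error), the total variation distance in the paper's convention
(L¹ distance of the joint densities, i.e. twice the sup-over-events distance) is bounded by
four times the realizable transfer measure over the class of all such classifiers. -/
theorem stmt_10 {X : Type*} [MeasurableSpace X]
    (S T : Measure (X × ℤ)) [IsProbabilityMeasure S] [IsProbabilityMeasure T]
    (hSlab : S {p : X × ℤ | p.2 = -1 ∨ p.2 = 1} = 1)
    (hTlab : T {p : X × ℤ | p.2 = -1 ∨ p.2 = 1} = 1) :
    2 * sSup {r : ℝ | ∃ A : Set (X × ℤ), MeasurableSet A ∧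
        r = |(S A).toReal - (T A).toReal|}
      ≤ 4 * ⨆ h : {h : X → ℤ | Measurable h ∧ ∀ x, h x = -1 ∨ h x = 0 ∨ h x = 1},
          |(S {p : X × ℤ | (h : X → ℤ) p.1 ≠ p.2}).toReal
            - (T {p : X × ℤ | (h : X → ℤ) p.1 ≠ p.2}).toReal| := by
  set M := ⨆ h : {h : X → ℤ | Measurable h ∧ ∀ x, h x = -1 ∨ h x = 0 ∨ h x = 1},
    |(S (misclassified h)).toReal - (T (misclassified h)).toReal|
  have hbdd : BddAbove (Set.range fun h : {h : X → ℤ | Measurable h ∧ ∀ x,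
      h x = -1 ∨ h x = 0 ∨ h x = 1} =>
      |(S (misclassified h)).toReal - (T (misclassified h)).toReal|) :=
    ⟨1, by rintro _ ⟨h, rfl⟩; exact abs_toReal_measure_sub_le_one S T _ _⟩
  have gap_le {B : Set X} (hB : MeasurableSet B) {v : ℤ} (hv : v = -1 ∨ v = 1) :
      |(S (misclassified (abstainOn B v))).toReal - (T (misclassified (abstainOn B v))).toReal|
        ≤ M :=
    le_ciSup hbdd ⟨_, measurable_abstainOn hB v, abstainOn_mem_ternary B hv⟩
  have event_gap_le {A : Set (X × ℤ)} (hA : MeasurableSet A) :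
      |(S A).toReal - (T A).toReal| ≤ 2 * M := by
    have hS := toReal_measure_add_one_eq_misclassified S (ae_label_of_measure_eq_one S hSlab) hA
    have hT := toReal_measure_add_one_eq_misclassified T (ae_label_of_measure_eq_one T hTlab) hA
    have h₁ := gap_le (measurableSet_slice hA 1) (Or.inr rfl)
    have h₂ := gap_le (measurableSet_slice hA (-1)) (Or.inl rfl)
    rw [abs_le] at h₁ h₂ ⊢
    constructor <;> linarith
  calc _ ≤ 2 * (2 * M) := by
        gcongr
        refine Real.sSup_le ?_ (mul_nonneg zero_le_two (Real.iSup_nonneg fun _ ↦ abs_nonneg _))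
        rintro _ ⟨A, hA, rfl⟩
        exact event_gap_le hA
    _ = 4 * M := by ring
end

section
/- Estimation error reduction: for any Γ ⊆ H and empirical distributions Ŝ, T̂, one has T_Γ(S‖T) ≤ T_Γ(Ŝ‖T̂) + 2·est_Γ(S) + 2·est_Γ(T), where est_Γ(D) = sup_{h∈Γ} |ε_D(h) − ε_D̂(h)|. -/
/-!
Each true risk is within `est` of its empirical counterpart, uniformly on `Γ`, so the infima over
`Γ` are within `est` of each other too. Hence every excess risk `ε(h) - inf ε` moves by at most
`2 est` when the distributions are replaced by their samples, and taking the supremum over `h`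
of the difference of the two excess risks gives the bound.
-/

section UniformPerturbation

variable {ι : Type*} [Nonempty ι] {f g : ι → ℝ} {c : ℝ}

theorem ciInf_le_ciInf_add_of_abs_sub_le (hg : BddBelow (Set.range g))
    (hfg : ∀ i, |f i - g i| ≤ c) : ⨅ i, g i ≤ (⨅ i, f i) + c := by
  have hle : (⨅ i, g i) - c ≤ ⨅ i, f i := le_ciInf fun i => by
    linarith [ciInf_le hg i, (abs_le.mp (hfg i)).1]
  linarith

theorem sub_ciInf_le_sub_ciInf_add_two_mul (hg : BddBelow (Set.range g))
    (hfg : ∀ i, |f i - g i| ≤ c) (i : ι) :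
    f i - ⨅ j, f j ≤ g i - (⨅ j, g j) + 2 * c := by
  linarith [ciInf_le_ciInf_add_of_abs_sub_le hg hfg, (abs_le.mp (hfg i)).2]

end UniformPerturbation

theorem stmt_11_general {H : Type*} (Γ : Set H) (hΓ : Γ.Nonempty) (εS εT εSh εTh : H → ℝ)
    (hbS : BddBelow (εS '' Γ)) (hbTh : BddBelow (εTh '' Γ))
    (hbemp : BddAbove (Set.range fun h : Γ =>
      (εTh h - (⨅ h' : Γ, εTh h')) - (εSh h - (⨅ h' : Γ, εSh h'))))
    (hestS : BddAbove (Set.range fun h : Γ => |εS h - εSh h|))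
    (hestT : BddAbove (Set.range fun h : Γ => |εT h - εTh h|)) :
    (⨆ h : Γ, ((εT h - (⨅ h' : Γ, εT h')) - (εS h - (⨅ h' : Γ, εS h'))))
      ≤ (⨆ h : Γ, ((εTh h - (⨅ h' : Γ, εTh h')) - (εSh h - (⨅ h' : Γ, εSh h'))))
        + 2 * (⨆ h : Γ, |εS h - εSh h|) + 2 * (⨆ h : Γ, |εT h - εTh h|) := by
  have := hΓ.to_subtype
  rw [Set.image_eq_range] at hbS hbTh
  have hS : ∀ h : Γ, |εSh h - εS h| ≤ ⨆ h : Γ, |εS h - εSh h| := fun h =>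
    abs_sub_comm (εS h) (εSh h) ▸ le_ciSup hestS h
  have hT : ∀ h : Γ, |εT h - εTh h| ≤ ⨆ h : Γ, |εT h - εTh h| := le_ciSup hestT
  refine ciSup_le fun h => ?_
  linarith [sub_ciInf_le_sub_ciInf_add_two_mul hbTh hT h,
    sub_ciInf_le_sub_ciInf_add_two_mul hbS hS h, le_ciSup hbemp h]

/-- Reduction of estimation error for the one-sided transfer measure:
T_Γ(S‖T) ≤ T_Γ(Ŝ‖T̂) + 2 est_Γ(S) + 2 est_Γ(T). Here εSh, εTh are the empirical risks. -/
theorem stmt_11 {H : Type*} (Γ : Set H) (hΓ : Γ.Nonempty) (εS εT εSh εTh : H → ℝ)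
    (hbS : BddBelow (εS '' Γ)) (hbT : BddBelow (εT '' Γ))
    (hbSh : BddBelow (εSh '' Γ)) (hbTh : BddBelow (εTh '' Γ))
    (hbemp : BddAbove (Set.range fun h : Γ =>
      (εTh h - (⨅ h' : Γ, εTh h')) - (εSh h - (⨅ h' : Γ, εSh h'))))
    (hestS : BddAbove (Set.range fun h : Γ => |εS h - εSh h|))
    (hestT : BddAbove (Set.range fun h : Γ => |εT h - εTh h|)) :
    (⨆ h : Γ, ((εT h - (⨅ h' : Γ, εT h')) - (εS h - (⨅ h' : Γ, εS h'))))
      ≤ (⨆ h : Γ, ((εTh h - (⨅ h' : Γ, εTh h')) - (εSh h - (⨅ h' : Γ, εSh h'))))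
        + 2 * (⨆ h : Γ, |εS h - εSh h|) + 2 * (⨆ h : Γ, |εT h - εTh h|) :=
  stmt_11_general Γ hΓ εS εT εSh εTh hbS hbTh hbemp hestS hestT
end

section
/- Optimization guarantee: suppose for learned (g, h) with h = q(θ,·), max_{‖θ'−θ‖≤δ} [ (1/n)Σ_i ε_{S_i}(h∘g) + (max_i ε_{S_i}(h'∘g) − min_i ε_{S_i}(h'∘g)) ] ≤ η, where each loss functional ε_{S_i^g} is L_ℓ-Lipschitz w.r.t. the L¹(S_i^g) norm and q(·,x) is L_θ-Lipschitz for all x. Then for Γ = {q(θ',·) : ‖θ'−θ‖ ≤ δ}: (a) T_Γ^r(T_1^g, T_2^g) ≤ η for any mixtures T_1^g, T_2^g ∈ conv(S_1^g,…,S_n^g); (b) ε_{S_i}(h'∘g) ≤ η + L_ℓ L_θ δ for all h' ∈ Γ and all i; (c) ε_T(h'∘g) ≤ 2η + L_ℓ L_θ δ for any mixture T with T^g ∈ conv(S_1^g,…,S_n^g). -/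
/-! The risk of a mixture is the corresponding convex combination of the source risks. Since
the average source risk at `θ` is nonnegative, the objective bounds the spread of the source
risks at every `θ'` in the ball by `η`, which gives (a). For (b), compare with a source whose
risk at `θ` is at most the average: moving from `θ` to `θ'` changes each source risk by at most
`L_ℓ L_θ δ`. Then (c) follows from (b) because `η ≥ 0`. -/

open MeasureTheory
open scoped NNReal ENNReal

section ConvexCombination

variable {ι : Type*} [Fintype ι] {w w' : ι → ℝ≥0} {a : ι → ℝ} {c : ℝ}

lemma sum_coe_mul_le_of_forall_le (hw : ∑ i, w i = 1) (h : ∀ i, a i ≤ c) :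
    ∑ i, (w i : ℝ) * a i ≤ c := by
  have hw' : ∑ i, (w i : ℝ) = 1 := by exact_mod_cast hw
  calc ∑ i, (w i : ℝ) * a i ≤ ∑ i, (w i : ℝ) * c :=
        Finset.sum_le_sum fun i _ => mul_le_mul_of_nonneg_left (h i) (w i).coe_nonneg
    _ = c := by rw [← Finset.sum_mul, hw', one_mul]

lemma sum_coe_mul_sub_sum_coe_mul_le (hw : ∑ i, w i = 1) (hw' : ∑ i, w' i = 1)
    (h : ∀ i j, a i - a j ≤ c) :
    ∑ i, (w i : ℝ) * a i - ∑ j, (w' j : ℝ) * a j ≤ c := by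
  have hw'_real : ∑ j, (w' j : ℝ) = 1 := by exact_mod_cast hw'
  have hw_real : ∑ i, (w i : ℝ) = 1 := by exact_mod_cast hw
  have hinner : ∀ i, a i - ∑ j, (w' j : ℝ) * a j = ∑ j, (w' j : ℝ) * (a i - a j) := by
    intro i
    simp only [mul_sub, Finset.sum_sub_distrib, ← Finset.sum_mul, hw'_real, one_mul]
  calc ∑ i, (w i : ℝ) * a i - ∑ j, (w' j : ℝ) * a j
      = ∑ i, (w i : ℝ) * (a i - ∑ j, (w' j : ℝ) * a j) := by
        simp only [mul_sub, Finset.sum_sub_distrib, ← Finset.sum_mul, hw_real, one_mul]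
    _ ≤ c := sum_coe_mul_le_of_forall_le hw fun i => by
        rw [hinner]
        exact sum_coe_mul_le_of_forall_le hw' (h i)

lemma abs_sum_coe_mul_sub_sum_coe_mul_le (hw : ∑ i, w i = 1) (hw' : ∑ i, w' i = 1)
    (h : ∀ i j, a i - a j ≤ c) :
    |∑ i, (w i : ℝ) * a i - ∑ j, (w' j : ℝ) * a j| ≤ c :=
  abs_sub_le_iff.2
    ⟨sum_coe_mul_sub_sum_coe_mul_le hw hw' h, sum_coe_mul_sub_sum_coe_mul_le hw' hw h⟩

end ConvexCombination

lemma le_add_of_average_add_sub_le {n : ℕ} {a b : Fin n → ℝ} {η K : ℝ} (i : Fin n)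
    (hopt : ∀ j, (1 / (n : ℝ)) * ∑ k, b k + (a i - a j) ≤ η) (hab : ∀ j, a j ≤ b j + K) :
    a i ≤ η + K := by
  have hn : (0 : ℝ) < n := by exact_mod_cast i.pos
  obtain ⟨j, -, hj⟩ : ∃ j ∈ Finset.univ, b j ≤ (1 / (n : ℝ)) * ∑ k, b k := by
    refine Finset.exists_le_of_sum_le ⟨i, Finset.mem_univ i⟩ ?_
    rw [Finset.sum_const, Finset.card_univ, Fintype.card_fin, nsmul_eq_mul, ← mul_assoc,
      mul_one_div_cancel hn.ne', one_mul]
  linarith [hopt j, hab j]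

lemma integral_le_of_forall_le_of_nonneg {α : Type*} [MeasurableSpace α] {μ : Measure α}
    [IsProbabilityMeasure μ] {f : α → ℝ} {C : ℝ} (hf : ∀ x, 0 ≤ f x) (hfC : ∀ x, f x ≤ C) :
    ∫ x, f x ∂μ ≤ C := by
  simpa using
    integral_mono_of_nonneg (.of_forall hf) (integrable_const (μ := μ) C) (.of_forall hfC)

lemma integral_sum_coe_smul_measure {α ι : Type*} [MeasurableSpace α] [Fintype ι]
    {μ : ι → Measure α} {f : α → ℝ} (w : ι → ℝ≥0) (hf : ∀ i, Integrable f (μ i)) :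
    ∫ x, f x ∂(∑ i, (w i : ℝ≥0∞) • μ i) = ∑ i, (w i : ℝ) * ∫ x, f x ∂μ i := by
  rw [integral_finsetSum_measure fun i _ => (hf i).smul_measure ENNReal.coe_ne_top]
  simp [NNReal.smul_def]

theorem stmt_19_general {X Z Y E Θ : Type*} [MeasurableSpace X] [MeasurableSpace Y]
    [MeasurableSpace Z] [NormedAddCommGroup E] [NormedAddCommGroup Θ]
    {n : ℕ}
    (S : Fin n → Measure (X × Y)) [∀ i, IsProbabilityMeasure (S i)]
    (g : X → Z) (hg : Measurable fun p : X × Y => (g p.1, p.2))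
    (q : Θ → Z → E) (ℓ : E → Y → ℝ) (hℓ0 : ∀ a y, 0 ≤ ℓ a y)
    (Lθ Lℓ δ η : ℝ) (hLθ : 0 ≤ Lθ) (hLℓ : 0 ≤ Lℓ)
    (hqlip : ∀ z θ₁ θ₂, ‖q θ₁ z - q θ₂ z‖ ≤ Lθ * ‖θ₁ - θ₂‖)
    (θ : Θ)
    (hint : ∀ (θ' : Θ) (i : Fin n), Integrable
      (fun p : Z × Y => ℓ (q θ' p.1) p.2) ((S i).map fun p => (g p.1, p.2)))
    (hlipfun : ∀ (i : Fin n) (θ₁ θ₂ : Θ),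
      |(∫ p, ℓ (q θ₁ p.1) p.2 ∂((S i).map fun p => (g p.1, p.2)))
          - ∫ p, ℓ (q θ₂ p.1) p.2 ∂((S i).map fun p => (g p.1, p.2))|
        ≤ Lℓ * ∫ p, ‖q θ₁ p.1 - q θ₂ p.1‖ ∂((S i).map fun p => (g p.1, p.2)))
    (hopt : ∀ θ', ‖θ' - θ‖ ≤ δ → ∀ i j : Fin n,
      (1 / (n : ℝ)) * (∑ k, ∫ p, ℓ (q θ p.1) p.2 ∂((S k).map fun p => (g p.1, p.2)))
        + ((∫ p, ℓ (q θ' p.1) p.2 ∂((S i).map fun p => (g p.1, p.2)))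
          - ∫ p, ℓ (q θ' p.1) p.2 ∂((S j).map fun p => (g p.1, p.2))) ≤ η) :
    (∀ (π π' : Fin n → NNReal), ∑ i, π i = 1 → ∑ i, π' i = 1 →
      ∀ θ', ‖θ' - θ‖ ≤ δ →
        |(∫ p, ℓ (q θ' p.1) p.2
            ∂(∑ i, (π i : ENNReal) • (S i).map fun p => (g p.1, p.2)))
          - ∫ p, ℓ (q θ' p.1) p.2
            ∂(∑ i, (π' i : ENNReal) • (S i).map fun p => (g p.1, p.2))| ≤ η) ∧
    (∀ θ', ‖θ' - θ‖ ≤ δ → ∀ i : Fin n,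
      (∫ p, ℓ (q θ' p.1) p.2 ∂((S i).map fun p => (g p.1, p.2))) ≤ η + Lℓ * Lθ * δ) ∧
    (∀ (π : Fin n → NNReal), ∑ i, π i = 1 → ∀ θ', ‖θ' - θ‖ ≤ δ →
      (∫ p, ℓ (q θ' p.1) p.2
          ∂(∑ i, (π i : ENNReal) • (S i).map fun p => (g p.1, p.2)))
        ≤ 2 * η + Lℓ * Lθ * δ) := by
  set μ : Fin n → Measure (Z × Y) := fun i => (S i).map fun p => (g p.1, p.2)
  have hμ : ∀ i, IsProbabilityMeasure (μ i) := fun i =>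
    Measure.isProbabilityMeasure_map hg.aemeasurable
  set R : Θ → Fin n → ℝ := fun θ' i => ∫ p, ℓ (q θ' p.1) p.2 ∂μ i
  have hmix : ∀ (π : Fin n → ℝ≥0) θ',
      ∫ p, ℓ (q θ' p.1) p.2 ∂(∑ i, (π i : ℝ≥0∞) • μ i) = ∑ i, (π i : ℝ) * R θ' i :=
    fun π θ' => integral_sum_coe_smul_measure π (hint θ')
  have havg : 0 ≤ (1 / (n : ℝ)) * ∑ k, R θ k :=
    mul_nonneg (by positivity) (Finset.sum_nonneg fun k _ => integral_nonneg fun p => hℓ0 _ _)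
  have hspread : ∀ θ', ‖θ' - θ‖ ≤ δ → ∀ i j, R θ' i - R θ' j ≤ η := fun θ' hθ' i j => by
    linarith [hopt θ' hθ' i j]
  have hstable : ∀ θ', ‖θ' - θ‖ ≤ δ → ∀ i, R θ' i ≤ R θ i + Lℓ * Lθ * δ := by
    intro θ' hθ' i
    have hparam : ∫ p, ‖q θ' p.1 - q θ p.1‖ ∂μ i ≤ Lθ * δ :=
      integral_le_of_forall_le_of_nonneg (fun _ => norm_nonneg _) fun p =>
        (hqlip p.1 θ' θ).trans (mul_le_mul_of_nonneg_left hθ' hLθ)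
    have hlip := (le_abs_self _).trans ((hlipfun i θ' θ).trans (mul_le_mul_of_nonneg_left hparam hLℓ))
    linarith
  have hsource : ∀ θ', ‖θ' - θ‖ ≤ δ → ∀ i, R θ' i ≤ η + Lℓ * Lθ * δ := fun θ' hθ' i =>
    le_add_of_average_add_sub_le i (hopt θ' hθ' i) (hstable θ' hθ')
  refine ⟨fun π π' hπ hπ' θ' hθ' => ?_, hsource, fun π hπ θ' hθ' => ?_⟩
  · rw [hmix, hmix]
    exact abs_sum_coe_mul_sub_sum_coe_mul_le hπ hπ' (hspread θ' hθ')
  · rw [hmix]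
    refine sum_coe_mul_le_of_forall_le hπ fun i => ?_
    linarith [hsource θ' hθ' i, hopt θ' hθ' i i]

/-- Optimization guarantee: if the minimax objective is at most η on the δ-ball
Γ = {q(θ',·) : ‖θ'−θ‖ ≤ δ}, then (a) the realizable transfer measure between any two
mixtures of the pushed-forward sources is at most η, (b) every source risk of every
classifier in Γ is at most η + L_ℓ L_θ δ, and (c) the risk on any mixture domain is at most
2η + L_ℓ L_θ δ. -/
theorem stmt_19 {X Z Y E Θ : Type*} [MeasurableSpace X] [MeasurableSpace Y]
    [MeasurableSpace Z] [NormedAddCommGroup E] [NormedAddCommGroup Θ]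
    {n : ℕ} (hn : 0 < n)
    (S : Fin n → Measure (X × Y)) [∀ i, IsProbabilityMeasure (S i)]
    (g : X → Z) (hg : Measurable fun p : X × Y => (g p.1, p.2))
    (q : Θ → Z → E) (ℓ : E → Y → ℝ) (hℓ0 : ∀ a y, 0 ≤ ℓ a y)
    (Lθ Lℓ δ η : ℝ) (hδ : 0 ≤ δ) (hLθ : 0 ≤ Lθ) (hLℓ : 0 ≤ Lℓ)
    (hqlip : ∀ z θ₁ θ₂, ‖q θ₁ z - q θ₂ z‖ ≤ Lθ * ‖θ₁ - θ₂‖)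
    (θ : Θ)
    (hint : ∀ (θ' : Θ) (i : Fin n), Integrable
      (fun p : Z × Y => ℓ (q θ' p.1) p.2) ((S i).map fun p => (g p.1, p.2)))
    (hlipfun : ∀ (i : Fin n) (θ₁ θ₂ : Θ),
      |(∫ p, ℓ (q θ₁ p.1) p.2 ∂((S i).map fun p => (g p.1, p.2)))
          - ∫ p, ℓ (q θ₂ p.1) p.2 ∂((S i).map fun p => (g p.1, p.2))|
        ≤ Lℓ * ∫ p, ‖q θ₁ p.1 - q θ₂ p.1‖ ∂((S i).map fun p => (g p.1, p.2)))
    (hopt : ∀ θ', ‖θ' - θ‖ ≤ δ → ∀ i j : Fin n,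
      (1 / (n : ℝ)) * (∑ k, ∫ p, ℓ (q θ p.1) p.2 ∂((S k).map fun p => (g p.1, p.2)))
        + ((∫ p, ℓ (q θ' p.1) p.2 ∂((S i).map fun p => (g p.1, p.2)))
          - ∫ p, ℓ (q θ' p.1) p.2 ∂((S j).map fun p => (g p.1, p.2))) ≤ η) :
    (∀ (π π' : Fin n → NNReal), ∑ i, π i = 1 → ∑ i, π' i = 1 →
      ∀ θ', ‖θ' - θ‖ ≤ δ →
        |(∫ p, ℓ (q θ' p.1) p.2
            ∂(∑ i, (π i : ENNReal) • (S i).map fun p => (g p.1, p.2)))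
          - ∫ p, ℓ (q θ' p.1) p.2
            ∂(∑ i, (π' i : ENNReal) • (S i).map fun p => (g p.1, p.2))| ≤ η) ∧
    (∀ θ', ‖θ' - θ‖ ≤ δ → ∀ i : Fin n,
      (∫ p, ℓ (q θ' p.1) p.2 ∂((S i).map fun p => (g p.1, p.2))) ≤ η + Lℓ * Lθ * δ) ∧
    (∀ (π : Fin n → NNReal), ∑ i, π i = 1 → ∀ θ', ‖θ' - θ‖ ≤ δ →
      (∫ p, ℓ (q θ' p.1) p.2
          ∂(∑ i, (π i : ENNReal) • (S i).map fun p => (g p.1, p.2)))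
        ≤ 2 * η + Lℓ * Lθ * δ) :=
  stmt_19_general S g hg q ℓ hℓ0 Lθ Lℓ δ η hLθ hLℓ hqlip θ hint hlipfun hopt
end
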